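/- Let p ≥ 0 and let (X,d) be a finite metric space. Then (X,d) has strict p-negative type if and only if Γ_X^p > 0. -/
import Mathlib


open scoped BigOperators

/-- The kernel `d(x,y)^p`, with the convention that it vanishes on the diagonal
(this matters only when `p = 0`). -/
noncomputable def negKer {X : Type*} [MetricSpace X] (p : ℝ) (x y : X) : ℝ :=
  @ite ℝ (x = y) (Classical.dec _) 0 (dist x y ^ p)

/-- `(X,d)` has `p`-negative type: for all `k ≥ 2`, pairwise distinct points
`x₁,…,x_k` and reals `η₁,…,η_k` summing to zero,
`∑_{i,j} d(xᵢ,xⱼ)^p ηᵢ ηⱼ ≤ 0`. -/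
def HasNegType (X : Type*) [MetricSpace X] (p : ℝ) : Prop :=
  ∀ (k : ℕ), 2 ≤ k → ∀ (x : Fin k → X), Function.Injective x →
    ∀ (η : Fin k → ℝ), (∑ i, η i) = 0 →
      (∑ i, ∑ j, negKer p (x i) (x j) * η i * η j) ≤ 0

/-- `(X,d)` has strict `p`-negative type: `p`-negative type, with strict
inequality whenever `η ≠ 0`. -/
def HasStrictNegType (X : Type*) [MetricSpace X] (p : ℝ) : Prop :=
  HasNegType X p ∧
  ∀ (k : ℕ), 2 ≤ k → ∀ (x : Fin k → X), Function.Injective x →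
    ∀ (η : Fin k → ℝ), (∑ i, η i) = 0 → η ≠ 0 →
      (∑ i, ∑ j, negKer p (x i) (x j) * η i * η j) < 0

/-- A normalized `(s,t)`-simplex in `X`: `s+t` pairwise distinct points
`a₁,…,a_s,b₁,…,b_t` with positive weights `m`, `n`, each family summing to `1`. -/
structure IsNormSimplex {X : Type*} [MetricSpace X] {s t : ℕ}
    (a : Fin s → X) (b : Fin t → X) (m : Fin s → ℝ) (n : Fin t → ℝ) : Prop where
  inj_a : Function.Injective a
  inj_b : Function.Injective b
  disj : ∀ j i, a j ≠ b i
  m_pos : ∀ j, 0 < m j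
  n_pos : ∀ i, 0 < n i
  m_sum : (∑ j, m j) = 1
  n_sum : (∑ i, n i) = 1

/-- The `p`-negative type simplex gap `γ_D^p(ω)` of a loaded `(s,t)`-simplex. -/
noncomputable def simplexGap {X : Type*} [MetricSpace X] (p : ℝ) {s t : ℕ}
    (a : Fin s → X) (b : Fin t → X) (m : Fin s → ℝ) (n : Fin t → ℝ) : ℝ :=
  (∑ j, ∑ i, m j * n i * dist (a j) (b i) ^ p)
    - (∑ j₁, ∑ j₂, if j₁ < j₂ then m j₁ * m j₂ * dist (a j₁) (a j₂) ^ p else 0)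
    - (∑ i₁, ∑ i₂, if i₁ < i₂ then n i₁ * n i₂ * dist (b i₁) (b i₂) ^ p else 0)

/-- The (normalized) `p`-negative type gap `Γ_X^p` of `(X,d)`, as an extended
real number: the infimum of the simplex gaps over all normalized
`(s,t)`-simplices in `X`. -/
noncomputable def negTypeGapE (X : Type*) [MetricSpace X] (p : ℝ) : EReal :=
  sInf {g : EReal | ∃ (s t : ℕ) (a : Fin s → X) (b : Fin t → X)
    (m : Fin s → ℝ) (n : Fin t → ℝ),
      IsNormSimplex a b m n ∧ g = (simplexGap p a b m n : ℝ)}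

section Helpers

open Finset

variable {X : Type*} [MetricSpace X]

lemma negKer_self (p : ℝ) (x : X) : negKer p x x = 0 := by
  simp [negKer]

lemma negKer_of_ne (p : ℝ) {x y : X} (h : x ≠ y) : negKer p x y = dist x y ^ p := by
  simp [negKer, h]

lemma negKer_comm (p : ℝ) (x y : X) : negKer p x y = negKer p y x := by
  by_cases h : x = y
  · subst h; rfl
  · rw [negKer_of_ne p h, negKer_of_ne p (Ne.symm h), dist_comm]

lemma sum_sum_restrict {ι : Type*} [Fintype ι] (F : ι → ι → ℝ) (η : ι → ℝ)
    (s : Finset ι) (h : ∀ i ∉ s, η i = 0) :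
    ∑ i, ∑ j, F i j * η i * η j = ∑ i ∈ s, ∑ j ∈ s, F i j * η i * η j := by
  rw [← Finset.sum_subset (Finset.subset_univ s)
    (fun i _ hi => by
      apply Finset.sum_eq_zero; intro j _; rw [h i hi]; ring)]
  apply Finset.sum_congr rfl
  intro i _
  rw [← Finset.sum_subset (Finset.subset_univ s)
    (fun j _ hj => by rw [h j hj]; ring)]

lemma pair_sum_eq (p : ℝ) {s : ℕ} (y : Fin s → X) (hy : Function.Injective y)
    (c : Fin s → ℝ) :
    2 * (∑ j₁, ∑ j₂, if j₁ < j₂ then c j₁ * c j₂ * dist (y j₁) (y j₂) ^ p else 0)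
      = ∑ j₁, ∑ j₂, negKer p (y j₁) (y j₂) * c j₁ * c j₂ := by
  have key : ∀ j₁ j₂ : Fin s, negKer p (y j₁) (y j₂) * c j₁ * c j₂
      = (if j₁ < j₂ then c j₁ * c j₂ * dist (y j₁) (y j₂) ^ p else 0)
        + (if j₂ < j₁ then c j₂ * c j₁ * dist (y j₂) (y j₁) ^ p else 0) := by
    intro j₁ j₂
    rcases lt_trichotomy j₁ j₂ with h | h | h
    · rw [if_pos h, if_neg (asymm h), negKer_of_ne p (fun he => (ne_of_lt h) (hy he))]
      ring
    · subst h
      simp [negKer_self]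
    · rw [if_neg (asymm h), if_pos h, negKer_of_ne p (fun he => (ne_of_gt h) (hy he)),
        dist_comm]
      ring
  rw [show (∑ j₁, ∑ j₂, negKer p (y j₁) (y j₂) * c j₁ * c j₂)
      = (∑ j₁, ∑ j₂, ((if j₁ < j₂ then c j₁ * c j₂ * dist (y j₁) (y j₂) ^ p else 0)
        + (if j₂ < j₁ then c j₂ * c j₁ * dist (y j₂) (y j₁) ^ p else 0))) from
    Finset.sum_congr rfl fun j₁ _ => Finset.sum_congr rfl fun j₂ _ => key j₁ j₂]
  rw [Finset.sum_congr rfl (fun (j₁ : Fin s) _ => Finset.sum_add_distrib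
      (s := Finset.univ))]
  rw [Finset.sum_add_distrib]
  rw [Finset.sum_comm (f := fun j₁ j₂ =>
      if j₂ < j₁ then c j₂ * c j₁ * dist (y j₂) (y j₁) ^ p else 0)]
  ring

lemma gap_blocks (p : ℝ) {s t : ℕ} {a : Fin s → X} {b : Fin t → X}
    {m : Fin s → ℝ} {n : Fin t → ℝ} (h : IsNormSimplex a b m n) :
    2 * simplexGap p a b m n
      = 2 * (∑ j, ∑ i, negKer p (a j) (b i) * m j * n i)
        - (∑ j₁, ∑ j₂, negKer p (a j₁) (a j₂) * m j₁ * m j₂)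
        - (∑ i₁, ∑ i₂, negKer p (b i₁) (b i₂) * n i₁ * n i₂) := by
  have hc : (∑ j, ∑ i, m j * n i * dist (a j) (b i) ^ p)
      = ∑ j, ∑ i, negKer p (a j) (b i) * m j * n i := by
    refine Finset.sum_congr rfl fun j _ => Finset.sum_congr rfl fun i _ => ?_
    rw [negKer_of_ne p (h.disj j i)]; ring
  rw [simplexGap, hc, ← pair_sum_eq p a h.inj_a m, ← pair_sum_eq p b h.inj_b n]
  ring

lemma block_reindex {ι : Type*} (A B : Finset ι) (g : ι → ι → ℝ) :
    ∑ i ∈ A, ∑ j ∈ B, g i j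
      = ∑ j₁ : Fin A.card, ∑ j₂ : Fin B.card,
          g (A.equivFin.symm j₁) (B.equivFin.symm j₂) := by
  rw [← Finset.sum_coe_sort A, ← Equiv.sum_comp A.equivFin.symm]
  refine Finset.sum_congr rfl fun j₁ _ => ?_
  rw [← Finset.sum_coe_sort B, ← Equiv.sum_comp B.equivFin.symm]

lemma Q_neg_of_gaps_pos (p : ℝ)
    (hgap : ∀ (s t : ℕ) (a : Fin s → X) (b : Fin t → X) (m : Fin s → ℝ) (n : Fin t → ℝ),
      IsNormSimplex a b m n → 0 < simplexGap p a b m n)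
    (k : ℕ) (x : Fin k → X) (hx : Function.Injective x)
    (η : Fin k → ℝ) (hsum : (∑ i, η i) = 0) (hne : η ≠ 0) :
    (∑ i, ∑ j, negKer p (x i) (x j) * η i * η j) < 0 := by
  classical
  set A : Finset (Fin k) := Finset.univ.filter (fun i => 0 < η i) with hA
  set B : Finset (Fin k) := Finset.univ.filter (fun i => η i < 0) with hB
  have hmemA : ∀ i, i ∈ A ↔ 0 < η i := fun i => by simp [hA]
  have hmemB : ∀ i, i ∈ B ↔ η i < 0 := fun i => by simp [hB]
  have hAne : A.Nonempty := by
    by_contra hAe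
    rw [Finset.not_nonempty_iff_eq_empty] at hAe
    have hall : ∀ i ∈ Finset.univ, η i ≤ 0 := by
      intro i _
      by_contra hpos
      exact absurd (Finset.eq_empty_iff_forall_notMem.mp hAe i)
        (by simp [hmemA, lt_of_not_ge hpos])
    have := (Finset.sum_eq_zero_iff_of_nonpos hall).mp hsum
    exact hne (funext fun i => this i (Finset.mem_univ i))
  have hBne : B.Nonempty := by
    by_contra hBe
    rw [Finset.not_nonempty_iff_eq_empty] at hBe
    have hall : ∀ i ∈ Finset.univ, 0 ≤ η i := by
      intro i _
      by_contra hneg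
      exact absurd (Finset.eq_empty_iff_forall_notMem.mp hBe i)
        (by simp [hmemB, lt_of_not_ge hneg])
    have := (Finset.sum_eq_zero_iff_of_nonneg hall).mp hsum
    exact hne (funext fun i => this i (Finset.mem_univ i))
  have hdisj : Disjoint A B := by
    rw [Finset.disjoint_left]
    intro i hi hi'
    exact absurd ((hmemB i).mp hi') (not_lt_of_gt ((hmemA i).mp hi))
  have hsupp : ∀ i, i ∉ A ∪ B → η i = 0 := by
    intro i hi
    rw [Finset.mem_union] at hi
    push_neg at hi
    have h1 := (not_iff_not.mpr (hmemA i)).mp hi.1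
    have h2 := (not_iff_not.mpr (hmemB i)).mp hi.2
    linarith [lt_or_ge 0 (η i), le_of_not_gt h1, le_of_not_gt h2]
  set S : ℝ := ∑ i ∈ A, η i with hSdef
  have hS : 0 < S := Finset.sum_pos (fun i hi => (hmemA i).mp hi) hAne
  have hsumB : ∑ i ∈ B, η i = -S := by
    have h1 : (∑ i, η i) = ∑ i ∈ A ∪ B, η i :=
      (Finset.sum_subset (Finset.subset_univ _) (fun i _ hi => hsupp i hi)).symm
    rw [Finset.sum_union hdisj] at h1
    rw [hsum] at h1
    linarith
  -- the simplex
  set eA := A.equivFin.symm with heA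
  set eB := B.equivFin.symm with heB
  set a : Fin A.card → X := fun j => x (eA j) with ha
  set b : Fin B.card → X := fun i => x (eB i) with hb
  set m : Fin A.card → ℝ := fun j => η (eA j) / S with hm
  set n : Fin B.card → ℝ := fun i => -(η (eB i)) / S with hn
  have hηA : ∀ j, 0 < η (eA j) := fun j => (hmemA _).mp (eA j).2
  have hηB : ∀ i, η (eB i) < 0 := fun i => (hmemB _).mp (eB i).2
  have hsimp : IsNormSimplex a b m n := by
    refine ⟨?_, ?_, ?_, ?_, ?_, ?_, ?_⟩
    · intro j₁ j₂ he
      exact eA.injective (Subtype.coe_injective (hx he))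
    · intro i₁ i₂ he
      exact eB.injective (Subtype.coe_injective (hx he))
    · intro j i he
      have hcoe : (eA j : Fin k) = (eB i : Fin k) := hx he
      have h1 := hηA j
      rw [hcoe] at h1
      linarith [hηB i]
    · intro j; exact div_pos (hηA j) hS
    · intro i; exact div_pos (by linarith [hηB i]) hS
    · rw [hm, ← Finset.sum_div]
      rw [show (∑ j, η (eA j)) = S by
        rw [hSdef, ← Finset.sum_coe_sort A η, ← Equiv.sum_comp eA (fun i : A => η i)]]
      exact div_self hS.ne'
    · rw [hn, ← Finset.sum_div]
      have hb2 : (∑ i, η (eB i)) = -S := by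
        rw [← Finset.sum_coe_sort B η, ← Equiv.sum_comp eB (fun i : B => η i)] at hsumB
        exact hsumB
      rw [show (∑ i : Fin _, -η (eB i)) = S by rw [Finset.sum_neg_distrib, hb2]; ring]
      exact div_self hS.ne'
  have hg : 0 < simplexGap p a b m n := hgap _ _ a b m n hsimp
  -- value of η at simplex points
  have hvA : ∀ j, η (eA j) = m j * S := fun j => (div_mul_cancel₀ _ hS.ne').symm
  have hvB : ∀ i, η (eB i) = -(n i * S) := fun i => by
    rw [hn]; field_simp
  -- restrict and split the quadratic form
  have h1 : (∑ i, ∑ j, negKer p (x i) (x j) * η i * η j)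
      = ∑ i ∈ A ∪ B, ∑ j ∈ A ∪ B, negKer p (x i) (x j) * η i * η j :=
    sum_sum_restrict _ η _ hsupp
  have h2 : (∑ i ∈ A ∪ B, ∑ j ∈ A ∪ B, negKer p (x i) (x j) * η i * η j)
      = (∑ i ∈ A, ∑ j ∈ A, negKer p (x i) (x j) * η i * η j)
        + (∑ i ∈ A, ∑ j ∈ B, negKer p (x i) (x j) * η i * η j)
        + ((∑ i ∈ B, ∑ j ∈ A, negKer p (x i) (x j) * η i * η j)
        + (∑ i ∈ B, ∑ j ∈ B, negKer p (x i) (x j) * η i * η j)) := by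
    rw [Finset.sum_union hdisj]
    congr 1 <;> rw [← Finset.sum_add_distrib] <;>
      exact Finset.sum_congr rfl fun i _ => Finset.sum_union hdisj
  have hAAval : (∑ i ∈ A, ∑ j ∈ A, negKer p (x i) (x j) * η i * η j)
      = S^2 * ∑ j₁, ∑ j₂, negKer p (a j₁) (a j₂) * m j₁ * m j₂ := by
    rw [block_reindex, Finset.mul_sum]
    refine Finset.sum_congr rfl fun j₁ _ => ?_
    rw [Finset.mul_sum]
    refine Finset.sum_congr rfl fun j₂ _ => ?_
    rw [hvA j₁, hvA j₂]; ring
  have hBBval : (∑ i ∈ B, ∑ j ∈ B, negKer p (x i) (x j) * η i * η j)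
      = S^2 * ∑ i₁, ∑ i₂, negKer p (b i₁) (b i₂) * n i₁ * n i₂ := by
    rw [block_reindex, Finset.mul_sum]
    refine Finset.sum_congr rfl fun i₁ _ => ?_
    rw [Finset.mul_sum]
    refine Finset.sum_congr rfl fun i₂ _ => ?_
    rw [hvB i₁, hvB i₂]; ring
  have hABval : (∑ i ∈ A, ∑ j ∈ B, negKer p (x i) (x j) * η i * η j)
      = -(S^2) * ∑ j, ∑ i, negKer p (a j) (b i) * m j * n i := by
    rw [block_reindex, Finset.mul_sum]
    refine Finset.sum_congr rfl fun j _ => ?_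
    rw [Finset.mul_sum]
    refine Finset.sum_congr rfl fun i _ => ?_
    rw [hvA j, hvB i]; ring
  have hBAval : (∑ i ∈ B, ∑ j ∈ A, negKer p (x i) (x j) * η i * η j)
      = -(S^2) * ∑ j, ∑ i, negKer p (a j) (b i) * m j * n i := by
    rw [block_reindex, Finset.sum_comm, Finset.mul_sum]
    refine Finset.sum_congr rfl fun j _ => ?_
    rw [Finset.mul_sum]
    refine Finset.sum_congr rfl fun i _ => ?_
    rw [hvA j, hvB i, negKer_comm p (x (eB i)) (x (eA j))]; ring
  have hblocks := gap_blocks p hsimp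
  have hS2 : 0 < S^2 := pow_pos hS 2
  have := mul_pos hS2 hg
  rw [h1, h2, hAAval, hABval, hBAval, hBBval]
  nlinarith [hblocks, this]

lemma simplex_eta [Fintype X] (p : ℝ) {s t : ℕ} {a : Fin s → X} {b : Fin t → X}
    {m : Fin s → ℝ} {n : Fin t → ℝ} (h : IsNormSimplex a b m n) :
    ∃ η : X → ℝ, (∑ x, η x) = 0 ∧ (∑ x, |η x|) = 2 ∧
      (∑ x, ∑ y, negKer p x y * η x * η y) = -2 * simplexGap p a b m n := by
  classical
  set η : X → ℝ := fun y =>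
    (∑ j, if y = a j then m j else 0) - (∑ i, if y = b i then n i else 0) with hηdef
  have hva : ∀ j₀, η (a j₀) = m j₀ := by
    intro j₀
    have h1 : (∑ j, if a j₀ = a j then m j else 0) = m j₀ := by
      simp [h.inj_a.eq_iff]
    have h2 : (∑ i, if a j₀ = b i then n i else 0) = 0 :=
      Finset.sum_eq_zero fun i _ => if_neg (h.disj j₀ i)
    simp only [hηdef, h1, h2, sub_zero]
  have hvb : ∀ i₀, η (b i₀) = -n i₀ := by
    intro i₀
    have h1 : (∑ j, if b i₀ = a j then m j else 0) = 0 :=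
      Finset.sum_eq_zero fun j _ => if_neg (fun he => (h.disj j i₀) he.symm)
    have h2 : (∑ i, if b i₀ = b i then n i else 0) = n i₀ := by
      simp [h.inj_b.eq_iff]
    simp only [hηdef, h1, h2, zero_sub]
  have hv0 : ∀ y, (∀ j, y ≠ a j) → (∀ i, y ≠ b i) → η y = 0 := by
    intro y hya hyb
    have h1 : (∑ j, if y = a j then m j else 0) = 0 :=
      Finset.sum_eq_zero fun j _ => if_neg (hya j)
    have h2 : (∑ i, if y = b i then n i else 0) = 0 :=
      Finset.sum_eq_zero fun i _ => if_neg (hyb i)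
    simp only [hηdef, h1, h2, sub_zero]
  set imA : Finset X := Finset.univ.image a with himA
  set imB : Finset X := Finset.univ.image b with himB
  have hdisjim : Disjoint imA imB := by
    rw [Finset.disjoint_left]
    intro y hyA hyB
    obtain ⟨j, _, rfl⟩ := Finset.mem_image.mp hyA
    obtain ⟨i, _, hbi⟩ := Finset.mem_image.mp hyB
    exact h.disj j i hbi.symm
  have hsupp : ∀ y, y ∉ imA ∪ imB → η y = 0 := by
    intro y hy
    rw [Finset.mem_union] at hy
    push_neg at hy
    refine hv0 y (fun j he => hy.1 ?_) (fun i he => hy.2 ?_)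
    · exact Finset.mem_image.mpr ⟨j, Finset.mem_univ j, he.symm⟩
    · exact Finset.mem_image.mpr ⟨i, Finset.mem_univ i, he.symm⟩
  have hinjA : ∀ x ∈ Finset.univ, ∀ y ∈ Finset.univ, a x = a y → x = y :=
    fun x _ y _ he => h.inj_a he
  have hinjB : ∀ x ∈ Finset.univ, ∀ y ∈ Finset.univ, b x = b y → x = y :=
    fun x _ y _ he => h.inj_b he
  refine ⟨η, ?_, ?_, ?_⟩
  · -- sum zero
    have hA : (∑ y, ∑ j, if y = a j then m j else 0) = ∑ j, m j := by
      rw [Finset.sum_comm]; simp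
    have hB : (∑ y, ∑ i, if y = b i then n i else 0) = ∑ i, n i := by
      rw [Finset.sum_comm]; simp
    simp only [hηdef]
    rw [Finset.sum_sub_distrib, hA, hB, h.m_sum, h.n_sum, sub_self]
  · -- abs sum = 2
    rw [← Finset.sum_subset (Finset.subset_univ (imA ∪ imB))
      (fun y _ hy => by rw [hsupp y hy, abs_zero])]
    rw [Finset.sum_union hdisjim, himA, himB,
      Finset.sum_image hinjA, Finset.sum_image hinjB]
    have e1 : (∑ j, |η (a j)|) = ∑ j, m j :=
      Finset.sum_congr rfl fun j _ => by rw [hva j, abs_of_pos (h.m_pos j)]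
    have e2 : (∑ i, |η (b i)|) = ∑ i, n i :=
      Finset.sum_congr rfl fun i _ => by
        rw [hvb i, abs_neg, abs_of_pos (h.n_pos i)]
    rw [e1, e2, h.m_sum, h.n_sum]; norm_num
  · -- quadratic form value
    rw [sum_sum_restrict _ η _ hsupp]
    have hsplit : (∑ x ∈ imA ∪ imB, ∑ y ∈ imA ∪ imB, negKer p x y * η x * η y)
        = (∑ x ∈ imA, ∑ y ∈ imA, negKer p x y * η x * η y)
          + (∑ x ∈ imA, ∑ y ∈ imB, negKer p x y * η x * η y)
          + ((∑ x ∈ imB, ∑ y ∈ imA, negKer p x y * η x * η y)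
          + (∑ x ∈ imB, ∑ y ∈ imB, negKer p x y * η x * η y)) := by
      rw [Finset.sum_union hdisjim]
      congr 1 <;> rw [← Finset.sum_add_distrib] <;>
        exact Finset.sum_congr rfl fun x _ => Finset.sum_union hdisjim
    have hAA : (∑ x ∈ imA, ∑ y ∈ imA, negKer p x y * η x * η y)
        = ∑ j₁, ∑ j₂, negKer p (a j₁) (a j₂) * m j₁ * m j₂ := by
      rw [himA, Finset.sum_image hinjA]
      refine Finset.sum_congr rfl fun j₁ _ => ?_
      rw [Finset.sum_image hinjA]
      exact Finset.sum_congr rfl fun j₂ _ => by rw [hva j₁, hva j₂]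
    have hBB : (∑ x ∈ imB, ∑ y ∈ imB, negKer p x y * η x * η y)
        = ∑ i₁, ∑ i₂, negKer p (b i₁) (b i₂) * n i₁ * n i₂ := by
      rw [himB, Finset.sum_image hinjB]
      refine Finset.sum_congr rfl fun i₁ _ => ?_
      rw [Finset.sum_image hinjB]
      refine Finset.sum_congr rfl fun i₂ _ => ?_
      rw [hvb i₁, hvb i₂]; ring
    have hAB : (∑ x ∈ imA, ∑ y ∈ imB, negKer p x y * η x * η y)
        = -(∑ j, ∑ i, negKer p (a j) (b i) * m j * n i) := by
      rw [himA, himB, Finset.sum_image hinjA, ← Finset.sum_neg_distrib]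
      refine Finset.sum_congr rfl fun j _ => ?_
      rw [Finset.sum_image hinjB, ← Finset.sum_neg_distrib]
      refine Finset.sum_congr rfl fun i _ => ?_
      rw [hva j, hvb i]; ring
    have hBA : (∑ x ∈ imB, ∑ y ∈ imA, negKer p x y * η x * η y)
        = -(∑ j, ∑ i, negKer p (a j) (b i) * m j * n i) := by
      rw [himA, himB, Finset.sum_image hinjB]
      have hin : ∀ i : Fin t, (∑ y ∈ Finset.univ.image a,
          negKer p (b i) y * η (b i) * η y)
          = ∑ j, negKer p (b i) (a j) * η (b i) * η (a j) :=
        fun i => Finset.sum_image hinjA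
      rw [Finset.sum_congr rfl fun i _ => hin i, Finset.sum_comm,
        ← Finset.sum_neg_distrib]
      refine Finset.sum_congr rfl fun j _ => ?_
      rw [← Finset.sum_neg_distrib]
      refine Finset.sum_congr rfl fun i _ => ?_
      rw [hva j, hvb i, negKer_comm p (b i) (a j)]; ring
    rw [hsplit, hAA, hAB, hBA, hBB]
    linarith [gap_blocks p h]

lemma f_neg [Fintype X] (p : ℝ) (h : HasStrictNegType X p) (η : X → ℝ)
    (hsum : (∑ x, η x) = 0) (hne : η ≠ 0) :
    (∑ x, ∑ y, negKer p x y * η x * η y) < 0 := by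
  classical
  obtain ⟨x₀, hx₀⟩ := Function.ne_iff.mp hne
  have hx₀' : η x₀ ≠ 0 := hx₀
  have hcard : 2 ≤ Fintype.card X := by
    rcases lt_or_gt_of_ne hx₀' with hneg | hpos
    · have : ∃ y, 0 < η y := by
        by_contra hno
        push_neg at hno
        have hpos' : 0 < ∑ x, -η x :=
          Finset.sum_pos' (fun x _ => neg_nonneg.mpr (hno x))
            ⟨x₀, Finset.mem_univ x₀, by linarith⟩
        rw [Finset.sum_neg_distrib, hsum] at hpos'
        linarith
      obtain ⟨y, hy⟩ := this
      exact Fintype.one_lt_card_iff.mpr ⟨x₀, y, fun he => by rw [he] at hneg; linarith⟩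
    · have : ∃ y, η y < 0 := by
        by_contra hno
        push_neg at hno
        have hpos' : 0 < ∑ x, η x :=
          Finset.sum_pos' (fun x _ => hno x) ⟨x₀, Finset.mem_univ x₀, hpos⟩
        linarith
      obtain ⟨y, hy⟩ := this
      exact Fintype.one_lt_card_iff.mpr ⟨x₀, y, fun he => by rw [he] at hpos; linarith⟩
  set e : Fin (Fintype.card X) ≃ X := (Fintype.equivFin X).symm with he
  have h1 := h.2 (Fintype.card X) hcard e e.injective (fun i => η (e i))
    (by rw [Equiv.sum_comp e η]; exact hsum)
    (fun h0 => hx₀' (by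
      have := congrFun h0 (e.symm x₀)
      simpa using this))
  calc (∑ x, ∑ y, negKer p x y * η x * η y)
      = ∑ i, ∑ j, negKer p (e i) (e j) * η (e i) * η (e j) := by
        rw [← Equiv.sum_comp e (fun x => ∑ y, negKer p x y * η x * η y)]
        exact Finset.sum_congr rfl fun i _ =>
          (Equiv.sum_comp e (fun y => negKer p (e i) y * η (e i) * η y)).symm
    _ < 0 := h1

lemma exists_gap_lb [Fintype X] (p : ℝ) (h : HasStrictNegType X p) :
    ∃ ε : ℝ, 0 < ε ∧ ∀ (s t : ℕ) (a : Fin s → X) (b : Fin t → X)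
      (m : Fin s → ℝ) (n : Fin t → ℝ),
        IsNormSimplex a b m n → ε ≤ simplexGap p a b m n := by
  classical
  set f : (X → ℝ) → ℝ := fun η => ∑ x, ∑ y, negKer p x y * η x * η y with hf
  have hfc : Continuous f := by
    apply continuous_finset_sum
    intro x _
    apply continuous_finset_sum
    intro y _
    exact (continuous_const.mul (continuous_apply x)).mul (continuous_apply y)
  set K : Set (X → ℝ) :=
    {η | (∑ x, η x) = 0 ∧ (∑ x, |η x|) = 2} with hK
  have hKclosed : IsClosed K := by
    apply IsClosed.inter
    · exact isClosed_eq (continuous_finset_sum _ fun x _ => continuous_apply x)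
        continuous_const
    · exact isClosed_eq (continuous_finset_sum _ fun x _ => (continuous_apply x).abs)
        continuous_const
  have hKsub : K ⊆ Metric.closedBall 0 2 := by
    intro η hη
    rw [Metric.mem_closedBall, dist_zero_right]
    refine (pi_norm_le_iff_of_nonneg (by norm_num)).mpr fun x => ?_
    rw [Real.norm_eq_abs]
    calc |η x| ≤ ∑ y, |η y| :=
          Finset.single_le_sum (f := fun y => |η y|) (fun y _ => abs_nonneg _)
            (Finset.mem_univ x)
      _ = 2 := hη.2
  have hKcpt : IsCompact K :=
    (isCompact_closedBall (0 : X → ℝ) 2).of_isClosed_subset hKclosed hKsub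
  by_cases hKne : K.Nonempty
  · obtain ⟨η₀, hη₀K, hmax⟩ := hKcpt.exists_isMaxOn hKne hfc.continuousOn
    have hη₀ne : η₀ ≠ 0 := by
      intro h0
      have := hη₀K.2
      rw [h0] at this
      simp at this
    have hfη₀ : f η₀ < 0 := f_neg p h η₀ hη₀K.1 hη₀ne
    refine ⟨-f η₀ / 2, by linarith, ?_⟩
    intro s t a b m n hs
    obtain ⟨η, hsum, habs, hQ⟩ := simplex_eta p hs
    have hηK : η ∈ K := ⟨hsum, habs⟩
    have hle : f η ≤ f η₀ := hmax hηK
    rw [hf] at hle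
    simp only at hle
    rw [hQ] at hle
    have hfr : f η₀ = ∑ x, ∑ y, negKer p x y * η₀ x * η₀ y := rfl
    linarith
  · refine ⟨1, one_pos, ?_⟩
    intro s t a b m n hs
    obtain ⟨η, hsum, habs, _⟩ := simplex_eta p hs
    exact absurd ⟨η, hsum, habs⟩ hKne


end Helpers

/-- A finite metric space has strict `p`-negative type iff `Γ_X^p > 0`. -/
theorem strictNegType_iff_gap_pos {X : Type*} [MetricSpace X] [Fintype X]
    (p : ℝ) (hp : 0 ≤ p) :
    HasStrictNegType X p ↔ 0 < negTypeGapE X p := by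
  constructor
  · intro h
    obtain ⟨ε, hε, hlb⟩ := exists_gap_lb p h
    have hle : (ε : EReal) ≤ negTypeGapE X p := by
      apply le_sInf
      rintro g ⟨s, t, a, b, m, n, hs, rfl⟩
      exact EReal.coe_le_coe_iff.mpr (hlb s t a b m n hs)
    exact lt_of_lt_of_le (EReal.coe_pos.mpr hε) hle
  · intro h
    have hgap : ∀ (s t : ℕ) (a : Fin s → X) (b : Fin t → X)
        (m : Fin s → ℝ) (n : Fin t → ℝ),
          IsNormSimplex a b m n → 0 < simplexGap p a b m n := by
      intro s t a b m n hs
      have hmem : ((simplexGap p a b m n : ℝ) : EReal) ∈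
          {g : EReal | ∃ (s t : ℕ) (a : Fin s → X) (b : Fin t → X)
            (m : Fin s → ℝ) (n : Fin t → ℝ),
              IsNormSimplex a b m n ∧ g = (simplexGap p a b m n : ℝ)} :=
        ⟨s, t, a, b, m, n, hs, rfl⟩
      have := lt_of_lt_of_le h (sInf_le hmem)
      exact EReal.coe_pos.mp this
    constructor
    · intro k hk x hx η hsum
      by_cases hη : η = 0
      · subst hη; simp
      · exact le_of_lt (Q_neg_of_gaps_pos p hgap k x hx η hsum hη)
    · intro k hk x hx η hsum hη
      exact Q_neg_of_gaps_pos p hgap k x hx η hsum hη
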